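/- Define Q_m(t) = (1/2) P_m(1/2 + it) where P_m(s) = ∑_{k=0}^m C(m,k) (-1)^k 2^{k+1} (s)_k / k!. Then for every m ≥ 0 and every real t: conj(Q_m(t)) = Q_m(-t) = (-1)^m Q_m(t). -/

import Mathlib

noncomputable def Q (m : ℕ) (t : ℝ) : ℂ :=
  ∑ k ∈ Finset.range (m + 1),
    (m.choose k : ℂ) * (-1) ^ k * 2 ^ k *
      (∏ i ∈ Finset.range k, ((1 / 2 + Complex.I * t) + i)) / (k.factorial : ℂ)

noncomputable def pp (s : ℂ) (k : ℕ) : ℂ := ∏ i ∈ Finset.range k, (s + i)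

noncomputable def TT (s : ℂ) (a k : ℕ) : ℂ :=
  (a.choose k : ℂ) * (-2) ^ k * pp s k / (k.factorial : ℂ)

noncomputable def UU (s : ℂ) (n k : ℕ) : ℂ :=
  (-2) * (n.choose k : ℂ) * (-2) ^ k * pp s (k + 1) / (k.factorial : ℂ)

noncomputable def VV (s : ℂ) (n : ℕ) : ℕ → ℂ
  | 0 => 0
  | (k + 1) => UU s n k

noncomputable def ff (n : ℕ) (s : ℂ) : ℂ := ∑ k ∈ Finset.range (n + 1), TT s n k

lemma ff_ext (n N : ℕ) (h : n + 1 ≤ N) (s : ℂ) :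
    ff n s = ∑ k ∈ Finset.range N, TT s n k := by
  rw [ff]
  apply Finset.sum_subset (Finset.range_subset_range.2 h)
  intro k _ hk
  simp only [Finset.mem_range, not_lt] at hk
  rw [TT, Nat.choose_eq_zero_of_lt (show n < k by omega)]
  simp

lemma nat_id (n k : ℕ) :
    (n + 1) * (n + 1).choose (k + 1) =
      (2 * k + 3) * n.choose (k + 1) + (k + 1) * n.choose k + n * (n - 1).choose (k + 1) := by
  have h3 : n * (n - 1).choose (k + 1) = (k + 2) * n.choose (k + 2) := by
    cases n with
    | zero => simp
    | succ m =>
      have := Nat.add_one_mul_choose_eq m (k + 1)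
      simpa [mul_comm] using this
  have h1 : (n + 1) * n.choose k = (k + 1) * (n.choose k + n.choose (k + 1)) := by
    have h := Nat.add_one_mul_choose_eq n k
    rw [h, Nat.choose_succ_succ]
    ring
  have h2 : (n + 1) * n.choose (k + 1) = (k + 2) * (n.choose (k + 1) + n.choose (k + 2)) := by
    have h := Nat.add_one_mul_choose_eq n (k + 1)
    rw [h, Nat.choose_succ_succ]
    ring
  rw [Nat.choose_succ_succ, Nat.mul_add, h1, h2, h3]
  ring

lemma key (n k : ℕ) (s : ℂ) :
    (n + 1 : ℂ) * TT s (n + 1) k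
      = (1 - 2 * s) * TT s n k + (n : ℂ) * TT s (n - 1) k - UU s n k + VV s n k := by
  cases k with
  | zero =>
    simp only [TT, UU, VV, pp]
    simp [Finset.prod_range_succ]
    ring
  | succ j =>
    have hP : pp s (j + 2) = pp s (j + 1) * (s + (j + 1)) := by
      rw [pp, pp, Finset.prod_range_succ]
      push_cast
      ring
    have hfac : ((j + 1).factorial : ℂ) = (j + 1) * (j.factorial : ℂ) := by
      rw [Nat.factorial_succ]
      push_cast
      ring
    have hfne : (j.factorial : ℂ) ≠ 0 := Nat.cast_ne_zero.2 j.factorial_ne_zero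
    have hjne : (j + 1 : ℂ) ≠ 0 := Nat.cast_add_one_ne_zero j
    have hc : ((n : ℂ) + 1) * ((n + 1).choose (j + 1) : ℂ)
        = (2 * j + 3) * (n.choose (j + 1) : ℂ) + (j + 1) * (n.choose j : ℂ)
          + n * ((n - 1).choose (j + 1) : ℂ) := by
      have := nat_id n j
      have := congrArg (Nat.cast : ℕ → ℂ) this
      push_cast at this
      exact this
    simp only [TT, UU, VV, hP, hfac]
    field_simp
    linear_combination (-2 : ℂ) ^ (j + 1) * pp s (j + 1) * hc


lemma sumUV (n : ℕ) (s : ℂ) :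
    ∑ k ∈ Finset.range (n + 2), VV s n k = ∑ k ∈ Finset.range (n + 2), UU s n k := by
  have h1 := Finset.sum_range_succ' (VV s n) (n + 2)
  have h2 := Finset.sum_range_succ (VV s n) (n + 2)
  have h3 : VV s n (n + 2) = 0 := by
    show UU s n (n + 1) = 0
    rw [UU, Nat.choose_eq_zero_of_lt (by omega)]
    simp
  have h4 : ∀ k, VV s n (k + 1) = UU s n k := fun k => rfl
  rw [h3, add_zero] at h2
  rw [h2] at h1
  simp only [h4] at h1
  rw [h1]
  simp [VV]

lemma ff_rec (n : ℕ) (s : ℂ) :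
    (n + 1 : ℂ) * ff (n + 1) s = (1 - 2 * s) * ff n s + (n : ℂ) * ff (n - 1) s := by
  rw [ff_ext n (n + 2) (by omega), ff_ext (n - 1) (n + 2) (by omega),
    ff_ext (n + 1) (n + 2) (le_refl _), Finset.mul_sum, Finset.mul_sum, Finset.mul_sum]
  calc ∑ k ∈ Finset.range (n + 2), (n + 1 : ℂ) * TT s (n + 1) k
      = ∑ k ∈ Finset.range (n + 2),
          ((1 - 2 * s) * TT s n k + (n : ℂ) * TT s (n - 1) k - UU s n k + VV s n k) :=
        Finset.sum_congr rfl fun k _ => key n k s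
    _ = _ := by
        simp only [Finset.sum_add_distrib, Finset.sum_sub_distrib, sumUV n s]
        ring

lemma ff_sym (n : ℕ) (s : ℂ) : ff n (1 - s) = (-1) ^ n * ff n s := by
  induction n using Nat.strong_induction_on with
  | _ n ih =>
    match n with
    | 0 => simp [ff, TT, pp]
    | (m + 1) =>
      have h := ff_rec m (1 - s)
      have h' := ff_rec m s
      have hm : ff m (1 - s) = (-1) ^ m * ff m s := ih m (by omega)
      have hm1 : ff (m - 1) (1 - s) = (-1) ^ (m - 1) * ff (m - 1) s := ih (m - 1) (by omega)
      have hne : ((m : ℂ) + 1) ≠ 0 := Nat.cast_add_one_ne_zero m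
      have hsign : (m : ℂ) * (-1 : ℂ) ^ (m - 1) = m * (-1) ^ (m + 1) := by
        cases m with
        | zero => simp
        | succ l => push_cast; rw [pow_succ, pow_succ]; ring
      apply mul_left_cancel₀ hne
      rw [hm, hm1] at h
      rw [h]
      linear_combination (-(-1 : ℂ) ^ (m + 1)) * h' + ff (m - 1) s * hsign

theorem stmt_15 (m : ℕ) (t : ℝ) :
    (starRingEnd ℂ) (Q m t) = Q m (-t) ∧ Q m (-t) = (-1) ^ m * Q m t := by
  have hQ : ∀ u : ℝ, Q m u = ff m (1 / 2 + Complex.I * u) := by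
    intro u
    rw [Q, ff]
    refine Finset.sum_congr rfl fun k _ => ?_
    rw [TT, pp, show ((-2 : ℂ)) = (-1) * 2 by norm_num, mul_pow]
    ring
  constructor
  · rw [Q, map_sum, Q]
    refine Finset.sum_congr rfl fun k _ => ?_
    simp only [map_div₀, map_mul, map_pow, map_prod, map_natCast, map_neg, map_one, map_add,
      map_ofNat, Complex.conj_I, Complex.conj_ofReal, map_one, Complex.ofReal_neg]
    congr 2
    refine Finset.prod_congr rfl fun i _ => ?_
    ring
  · rw [hQ, hQ]
    have hs : (1 / 2 + Complex.I * ((-t : ℝ) : ℂ)) = 1 - (1 / 2 + Complex.I * (t : ℂ)) := by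
      push_cast
      ring
    rw [hs, ff_sym]
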